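/- arXiv:2006.14934 — 3 statements merged into one kernel-verified Lean document; each statement's English description precedes it below -/
import Mathlib

section
/- Let A be a commutative ring, B a commutative A[t,t⁻¹]-algebra that is finite free as an A[t,t⁻¹]-module, and f ∈ B. Then there exists N such that for all n > N, multiplication by (1 − tⁿ·f) on B ⊗_A A' is injective for every A-module A'; that is, (1 − tⁿ f) : B → B is universally injective over A. -/
/-!
Write `R = A[t,t⁻¹]`, fix an `R`-basis `c` of `B` and let `g = det(1 - tⁿ f) ∈ R`. Once `n`
exceeds the pole order at `t = 0` of the matrix of `f`, `g` is a polynomial in `t` with constant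
term `1`. The adjugate gives `ψ ∘ (1 - tⁿ f) = g`, so it suffices that multiplication by `g` is
universally injective over `A`. In the `A`-basis `tˡ cⱼ` of `B` this map is unitriangular for the
grading by `l`, and a unitriangular map stays injective after any base change: the coordinate of
lowest degree of a nonzero tensor is left unchanged.
-/

open LaurentPolynomial Polynomial TensorProduct

section Unitriangular

variable {A M κ ι : Type*} [CommRing A] [AddCommGroup M] [Module A M] [LinearOrder ι]
  (N : Type*) [AddCommGroup N] [Module A N]

lemma TensorProduct.equivFinsuppOfBasisLeft_rTensor_symm_apply [DecidableEq κ]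
    (b : Module.Basis κ A M) (φ : M →ₗ[A] M) (q : κ →₀ N) (k : κ) :
    equivFinsuppOfBasisLeft b (φ.rTensor N ((equivFinsuppOfBasisLeft b).symm q)) k =
      q.sum fun l n => b.repr (φ (b l)) k • n := by
  simp [map_finsuppSum, Finsupp.sum_apply]

theorem Module.Basis.rTensor_injective_of_unitriangular (b : Basis κ A M) (w : κ → ι)
    (φ : M →ₗ[A] M) (h_lower : ∀ k l, b.repr (φ (b l)) k ≠ 0 → w l ≤ w k)
    (h_diag : ∀ k l, w k = w l → b.repr (φ (b l)) k = Finsupp.single l 1 k) :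
    Function.Injective (φ.rTensor N) := by
  classical
  rw [injective_iff_map_eq_zero]
  intro x hx
  obtain ⟨q, rfl⟩ := (equivFinsuppOfBasisLeft b).symm.surjective x
  suffices q = 0 by simp [this]
  by_contra hq
  obtain ⟨l₀, hl₀, hmin⟩ := q.support.exists_min_image w (Finsupp.support_nonempty_iff.2 hq)
  have hcoord := equivFinsuppOfBasisLeft_rTensor_symm_apply N b φ q l₀
  rw [hx, map_zero, Finsupp.zero_apply, Finsupp.sum_eq_single l₀, h_diag l₀ l₀ rfl,
    Finsupp.single_eq_same, one_smul] at hcoord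
  · exact Finsupp.mem_support_iff.1 hl₀ hcoord.symm
  · intro l hl hne
    by_cases hzero : b.repr (φ (b l)) l₀ = 0
    · rw [hzero, zero_smul]
    · have hw : w l₀ = w l :=
        (hmin l (Finsupp.mem_support_iff.2 hl)).antisymm (h_lower _ _ hzero)
      rw [h_diag _ _ hw, Finsupp.single_eq_of_ne hne.symm, zero_smul]
  · simp

end Unitriangular

section Laurent

variable {A : Type*} [CommRing A]

lemma LaurentPolynomial.coeff_toLaurent_of_neg (p : A[X]) {k : ℤ} (hk : k < 0) :
    (toLaurent p).coeff k = 0 := by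
  rw [coeff_toLaurent]
  refine Finsupp.mapDomain_of_notMem_range _ _ ?_
  rintro ⟨m, rfl⟩
  exact (Int.natCast_nonneg m).not_gt hk

lemma LaurentPolynomial.coeff_toLaurent_zero (p : A[X]) : (toLaurent p).coeff 0 = p.coeff 0 := by
  rw [coeff_toLaurent]
  exact Finsupp.mapDomain_apply Nat.castEmbedding.injective _ 0

lemma LaurentPolynomial.coeff_toLaurent_mul_T_of_lt (p : A[X]) {k l : ℤ} (h : k < l) :
    (toLaurent p * T l).coeff k = 0 := by
  rw [T, AddMonoidAlgebra.coeff_mul_single_apply, coeff_toLaurent_of_neg p (by omega), zero_mul]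

lemma LaurentPolynomial.coeff_toLaurent_mul_T_self (p : A[X]) (l : ℤ) :
    (toLaurent p * T l).coeff l = p.coeff 0 := by
  rw [T, AddMonoidAlgebra.coeff_mul_single_apply, add_neg_cancel, coeff_toLaurent_zero, mul_one]

lemma LaurentPolynomial.eventually_exists_toLaurent_eq_mul_T (f : A[T;T⁻¹]) :
    ∀ᶠ m : ℕ in Filter.atTop, ∃ p : A[X], toLaurent p = f * T m := by
  obtain ⟨n, p, hp⟩ := f.exists_T_pow
  filter_upwards [Filter.eventually_ge_atTop n] with m hm
  obtain ⟨d, rfl⟩ := Nat.exists_eq_add_of_le hm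
  exact ⟨p * X ^ d, by rw [map_mul, hp, toLaurent_X_pow, mul_T_assoc, Nat.cast_add]⟩

theorem Matrix.exists_det_one_sub_T_smul_eq_toLaurent {ι : Type*} [Fintype ι] [DecidableEq ι]
    (M : Matrix ι ι A[T;T⁻¹]) :
    ∃ N : ℕ, ∀ n > N,
      ∃ p : A[X], p.coeff 0 = 1 ∧ (1 - (T n : A[T;T⁻¹]) • M).det = toLaurent p := by
  obtain ⟨N, hN⟩ := (Filter.eventually_all.2 fun i => Filter.eventually_all.2 fun j =>
    (M i j).eventually_exists_toLaurent_eq_mul_T).exists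
  choose P hP using hN
  refine ⟨N, fun n hn => ⟨(1 - (X ^ (n - N) : A[X]) • Matrix.of P).det, ?_, ?_⟩⟩
  · rw [← constantCoeff_apply, RingHom.map_det]
    convert Matrix.det_one (n := ι) (R := A)
    ext i j
    rcases eq_or_ne i j with rfl | hij <;>
      simp [*, show 0 ≠ n - N by omega]
  · rw [RingHom.map_det]
    congr 1
    ext i j : 1
    simp [hP, Matrix.one_apply, mul_T_assoc, ← Nat.cast_add, Nat.add_sub_cancel' hn.le]

variable {M ι : Type*} [AddCommGroup M] [Module A[T;T⁻¹] M] [Module A M]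
  [IsScalarTower A A[T;T⁻¹] M] (N : Type*) [AddCommGroup N] [Module A N]

theorem Module.Basis.rTensor_injective_lsmul_toLaurent (c : Basis ι A[T;T⁻¹] M) {p : A[X]}
    (hp : p.coeff 0 = 1) :
    Function.Injective
      (((LinearMap.lsmul A[T;T⁻¹] M (toLaurent p)).restrictScalars A).rTensor N) := by
  classical
  let b := (AddMonoidAlgebra.basis ℤ A).smulTower c
  have hentry : ∀ k i l j, b.repr (toLaurent p • b (l, j)) (k, i) =
      (Finsupp.single j (toLaurent p * T l) i).coeff k := by
    intro k i l j
    rw [Basis.smulTower_repr_mk, Basis.smulTower_apply, smul_smul, map_smul, c.repr_self,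
      Finsupp.smul_single, smul_eq_mul, mul_one]
    rfl
  refine b.rTensor_injective_of_unitriangular N Prod.fst _ ?_ ?_
  · rintro ⟨k, i⟩ ⟨l, j⟩ h
    rw [LinearMap.restrictScalars_apply, LinearMap.lsmul_apply, hentry] at h
    by_contra hlt
    rcases eq_or_ne j i with rfl | hji
    · exact h (by rw [Finsupp.single_eq_same, coeff_toLaurent_mul_T_of_lt p (not_le.1 hlt)])
    · exact h (by rw [Finsupp.single_eq_of_ne hji.symm]; rfl)
  · rintro ⟨k, i⟩ ⟨l, j⟩ (rfl : k = l)
    rw [LinearMap.restrictScalars_apply, LinearMap.lsmul_apply, hentry]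
    rcases eq_or_ne j i with rfl | hji
    · rw [Finsupp.single_eq_same, Finsupp.single_eq_same, coeff_toLaurent_mul_T_self, hp]
    · rw [Finsupp.single_eq_of_ne hji.symm, Finsupp.single_eq_of_ne (by simpa using hji.symm)]
      rfl

end Laurent

theorem Module.Basis.exists_comp_eq_det_smul {R M ι : Type*} [CommRing R] [AddCommGroup M]
    [Module R M] [Fintype ι] [DecidableEq ι] (c : Basis ι R M) (φ : M →ₗ[R] M) :
    ∃ ψ : M →ₗ[R] M, ψ ∘ₗ φ = LinearMap.det φ • LinearMap.id :=
  ⟨Matrix.toLin c c (LinearMap.toMatrix c c φ).adjugate, by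
    rw [← Matrix.toLin_toMatrix c c φ, ← Matrix.toLin_mul, Matrix.toLin_toMatrix,
      Matrix.adjugate_mul, map_smul, Matrix.toLin_one, LinearMap.det_toMatrix]⟩

/-- If `B` is a finite free `A[t,t⁻¹]`-algebra and `f ∈ B`, then for `n` large,
multiplication by `1 - tⁿf` on `B` is universally injective over `A`. -/
theorem stmt_2 (A B : Type*) [CommRing A] [CommRing B]
    [Algebra A B] [Algebra (LaurentPolynomial A) B]
    [IsScalarTower A (LaurentPolynomial A) B]
    [Module.Free (LaurentPolynomial A) B] [Module.Finite (LaurentPolynomial A) B]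
    (f : B) :
    ∃ N : ℕ, ∀ n : ℕ, n > N →
      ∀ (A' : Type*) [AddCommGroup A'] [Module A A'],
        Function.Injective
          (LinearMap.rTensor A'
            (LinearMap.mulLeft A (1 - algebraMap (LaurentPolynomial A) B (T (n : ℤ)) * f))) := by
  classical
  let c := Module.Free.chooseBasis A[T;T⁻¹] B
  obtain ⟨N, hN⟩ := Matrix.exists_det_one_sub_T_smul_eq_toLaurent
    (LinearMap.toMatrix c c (LinearMap.mulLeft A[T;T⁻¹] f))
  refine ⟨N, fun n hn A' _ _ => ?_⟩
  obtain ⟨p, hp, hdet⟩ := hN n hn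
  let φ := LinearMap.mulLeft A[T;T⁻¹] (1 - algebraMap A[T;T⁻¹] B (T n) * f)
  have hφ : φ = LinearMap.id - (T n : A[T;T⁻¹]) • LinearMap.mulLeft A[T;T⁻¹] f := by
    ext x
    simp [φ, sub_mul, Algebra.smul_def, mul_assoc]
  have hdetφ : LinearMap.det φ = toLaurent p := by
    rw [← LinearMap.det_toMatrix c, hφ, map_sub, map_smul, LinearMap.toMatrix_id, hdet]
  obtain ⟨ψ, hψ⟩ := c.exists_comp_eq_det_smul φ
  rw [hdetφ] at hψ
  have hcomp :
      ψ.restrictScalars A ∘ₗ LinearMap.mulLeft A (1 - algebraMap A[T;T⁻¹] B (T n) * f) =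
      (LinearMap.lsmul A[T;T⁻¹] B (toLaurent p)).restrictScalars A :=
    LinearMap.ext fun x => LinearMap.congr_fun hψ x
  refine Function.Injective.of_comp (f := (ψ.restrictScalars A).rTensor A') ?_
  rw [← LinearMap.coe_comp, ← LinearMap.rTensor_comp, hcomp]
  exact c.rTensor_injective_lsmul_toLaurent A' hp
end

section
/- Let A be a commutative ring, B a commutative A[t,t⁻¹]-algebra that is finite free as an A[t,t⁻¹]-module, and f ∈ B. Then there exists N such that for all n > N, the quotient ring B/(1 − tⁿ f)B is a flat A-module. -/
open LaurentPolynomial TensorProduct LinearMap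

/-!
`B` is free over `A`, hence flat, so `B ⧸ (g)` with `g = 1 - tⁿf` is flat as soon as `g * x ∈ I • B`
implies `x ∈ I • B` for every ideal `I` of `A` (a diagram chase on `I ⊗ B → B`). In an
`A[t,t⁻¹]`-basis of `B`, membership in `I • B` means that all coefficients lie in `I`, and the
entries of the matrix of multiplication by `f` have no terms of degree below some `-N`. For
`n > N`, the degree-`e` coefficients of `tⁿ f x` only involve coefficients of `x` of degree `< e`,
so induction on the degree shows that the coefficients of `x` lie in `I` if those of `g * x` do.
-/

theorem TensorProduct.range_lift_lsmul_comp_subtype {A M : Type*} [CommRing A] [AddCommGroup M]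
    [Module A M] (I : Ideal A) :
    range (lift ((lsmul A M).comp I.subtype)) = I • ⊤ := by
  rw [Submodule.smul_eq_map₂, map₂_eq_range_lift_comp_mapIncl]
  have : lift (lsmul A M) ∘ₗ mapIncl I ⊤ =
      lift ((lsmul A M).comp I.subtype) ∘ₗ lTensor I (⊤ : Submodule A M).subtype := by
    ext; simp
  rw [this, range_comp_of_range_eq_top]
  exact range_eq_top.mpr (lTensor_surjective _ fun x => ⟨⟨x, trivial⟩, rfl⟩)

theorem TensorProduct.lift_lsmul_comp_subtype_comp_lTensor {A M N : Type*} [CommRing A]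
    [AddCommGroup M] [Module A M] [AddCommGroup N] [Module A N] (I : Ideal A) (φ : M →ₗ[A] N) :
    lift ((lsmul A N).comp I.subtype) ∘ₗ lTensor I φ = φ ∘ₗ lift ((lsmul A M).comp I.subtype) := by
  ext; simp

theorem Module.Flat.quotient_span_singleton_of_mul_mem_smul_top {A B : Type*} [CommRing A]
    [CommRing B] [Algebra A B] [Module.Flat A B] (g : B)
    (hg : ∀ (I : Ideal A) (x : B), g * x ∈ I • (⊤ : Submodule A B) → x ∈ I • (⊤ : Submodule A B)) :
    Module.Flat A (B ⧸ Ideal.span {g}) := by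
  rw [Module.Flat.iff_lift_lsmul_comp_subtype_injective]
  intro I hI
  set μ := lift ((lsmul A B).comp I.subtype)
  have hμ : Function.Injective μ := Module.Flat.iff_lift_lsmul_comp_subtype_injective.mp ‹_› hI
  let π := (Ideal.Quotient.mkₐ A (Ideal.span {g})).toLinearMap
  have hπg : π ∘ₗ mulLeft A g = 0 := by ext; simp [π]
  rw [injective_iff_map_eq_zero]
  intro z hz
  obtain ⟨y, rfl⟩ := lTensor_surjective (g := π) I Ideal.Quotient.mk_surjective z
  have hy : μ y ∈ Ideal.span {g} := by
    rw [← Ideal.Quotient.eq_zero_iff_mem, ← hz, ← comp_apply,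
      lift_lsmul_comp_subtype_comp_lTensor]
    rfl
  obtain ⟨c, hc⟩ := Ideal.mem_span_singleton'.mp hy
  obtain ⟨w, rfl⟩ : c ∈ range μ := by
    rw [range_lift_lsmul_comp_subtype]
    refine hg I c ?_
    rw [mul_comm, hc, ← range_lift_lsmul_comp_subtype]
    exact mem_range_self μ y
  have : y = lTensor I (mulLeft A g) w := hμ <| by
    rw [← comp_apply μ, lift_lsmul_comp_subtype_comp_lTensor, comp_apply, mulLeft_apply, ← hc,
      mul_comm]
  rw [this, ← comp_apply, ← lTensor_comp, hπg, lTensor_zero, LinearMap.zero_apply]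

theorem Module.Basis.mem_ideal_smul_top_iff {A M ι : Type*} [CommRing A] [AddCommGroup M]
    [Module A M] (v : Module.Basis ι A M) (I : Ideal A) (x : M) :
    x ∈ I • (⊤ : Submodule A M) ↔ ∀ i, v.repr x i ∈ I := by
  constructor
  · intro hx
    refine Submodule.smul_induction_on hx (fun a ha y _ i => ?_) (fun y z hy hz i => ?_)
    · simpa using I.mul_mem_right _ ha
    · simpa using I.add_mem (hy i) (hz i)
  · intro hx
    rw [← v.linearCombination_repr x, Finsupp.linearCombination_apply]
    exact Submodule.sum_mem _ fun i _ => Submodule.smul_mem_smul (hx i) trivial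

namespace LaurentPolynomial

section Semiring

variable {R : Type*} [Semiring R]

theorem coeff_T_mul (n e : ℤ) (p : R[T;T⁻¹]) : (T n * p).coeff e = p.coeff (e - n) := by
  rw [T, AddMonoidAlgebra.coeff_single_mul_apply, one_mul, neg_add_eq_sub]

theorem exists_coeff_eq_zero_of_lt {ι : Type*} [Finite ι] (p : ι → R[T;T⁻¹]) :
    ∃ m : ℤ, ∀ i, ∀ e < m, (p i).coeff e = 0 := by
  have (i : ι) : ∃ m : ℤ, ∀ e < m, (p i).coeff e = 0 := by
    obtain ⟨m, hm⟩ := (p i).coeff.support.finite_toSet.exists_ge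
    exact ⟨m, fun e he => Finsupp.notMem_support_iff.mp fun h => (hm e h).not_gt he⟩
  choose m hm using this
  obtain ⟨m₀, hm₀⟩ := Finite.exists_ge m
  exact ⟨m₀, fun i e he => hm i e (he.trans_le (hm₀ i))⟩

end Semiring

theorem coeff_mul_mem_of_coeff_mem {R : Type*} [CommSemiring R] {I : Ideal R} {p q : R[T;T⁻¹]}
    {m e : ℤ} (hq : ∀ a < m, q.coeff a = 0) (hp : ∀ a ≤ e - m, p.coeff a ∈ I) :
    (p * q).coeff e ∈ I := by
  classical
  rw [AddMonoidAlgebra.coeff_mul]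
  refine Ideal.sum_mem _ fun a _ => Ideal.sum_mem _ fun b _ => ?_
  dsimp only
  split_ifs with hab
  · rcases lt_or_ge b m with hb | hb
    · simp [hq b hb]
    · exact I.mul_mem_right _ (hp a (by omega))
  · exact I.zero_mem

end LaurentPolynomial

theorem Module.Basis.coeff_repr_mem_of_coeff_repr_sub_T_smul_mem {R M ι : Type*} [CommRing R]
    [AddCommGroup M] [Module R[T;T⁻¹] M] [Fintype ι] (b : Module.Basis ι R[T;T⁻¹] M)
    (φ : M →ₗ[R[T;T⁻¹]] M) (I : Ideal R) {m n : ℤ}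
    (hφ : ∀ i j, ∀ a < m, (b.repr (φ (b j)) i).coeff a = 0) (hn : 0 < m + n) {x : M}
    (hx : ∀ i e, (b.repr (x - (T n : R[T;T⁻¹]) • φ x) i).coeff e ∈ I) (i : ι) (e : ℤ) :
    (b.repr x i).coeff e ∈ I := by
  classical
  obtain ⟨m₀, hm₀⟩ := exists_coeff_eq_zero_of_lt fun j => b.repr x j
  induction e using Int.strongRec (m := m₀) generalizing i with
  | lt e he => rw [hm₀ i e he]; exact I.zero_mem
  | ge e _ ih =>
    have hsplit : (b.repr x i).coeff e =
        (b.repr (x - (T n : R[T;T⁻¹]) • φ x) i).coeff e + (b.repr (φ x) i).coeff (e - n) := by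
      simp only [map_sub, map_smul, Finsupp.sub_apply, Finsupp.smul_apply, smul_eq_mul,
        AddMonoidAlgebra.coeff_sub, coeff_T_mul, sub_add_cancel]
    have hφx : b.repr (φ x) i = ∑ j, b.repr x j * b.repr (φ (b j)) i := by
      rw [← LinearMap.toMatrix_mulVec_repr b b]
      simp [Matrix.mulVec, dotProduct, LinearMap.toMatrix_apply, mul_comm]
    rw [hsplit, hφx, AddMonoidAlgebra.coeff_sum, Finsupp.finsetSum_apply]
    exact I.add_mem (hx i e) <| Ideal.sum_mem _ fun j _ =>
      coeff_mul_mem_of_coeff_mem (hφ i j) fun a ha => ih a (by omega) j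

/-- If `B` is a finite free `A[t,t⁻¹]`-algebra and `f ∈ B`, then for `n` large,
`B/(1 - tⁿf)B` is a flat `A`-module. -/
theorem stmt_3 (A B : Type*) [CommRing A] [CommRing B]
    [Algebra A B] [Algebra (LaurentPolynomial A) B]
    [IsScalarTower A (LaurentPolynomial A) B]
    [Module.Free (LaurentPolynomial A) B] [Module.Finite (LaurentPolynomial A) B]
    (f : B) :
    ∃ N : ℕ, ∀ n : ℕ, n > N →
      Module.Flat A
        (B ⧸ Ideal.span {1 - algebraMap (LaurentPolynomial A) B (T (n : ℤ)) * f}) := by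
  let b := Module.Free.chooseBasis (LaurentPolynomial A) B
  obtain ⟨m, hm⟩ := exists_coeff_eq_zero_of_lt fun ij : _ × _ => b.repr (f * b ij.2) ij.1
  refine ⟨(-m).toNat, fun n hn => ?_⟩
  have : Module.Flat A B := Module.Flat.trans A (LaurentPolynomial A) B
  refine Module.Flat.quotient_span_singleton_of_mul_mem_smul_top _ fun I x hx => ?_
  let v := (AddMonoidAlgebra.basis ℤ A).smulTower b
  have hv (y : B) (e : ℤ) (i) : v.repr y (e, i) = (b.repr y i).coeff e := rfl
  rw [v.mem_ideal_smul_top_iff] at hx ⊢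
  rintro ⟨e, i⟩
  rw [hv]
  refine b.coeff_repr_mem_of_coeff_repr_sub_T_smul_mem (LinearMap.mulLeft _ f) I
    (fun i j => hm (i, j)) (n := n) (by omega) (fun i e => ?_) i e
  rw [LinearMap.mulLeft_apply, Algebra.smul_def, ← mul_assoc, ← one_sub_mul, ← hv]
  exact hx (e, i)
end

section
/- Let A be a commutative ring, B an A-algebra which is finite free of rank d over A[t,t⁻¹], and f₁, f₂ ∈ B. Then there exists N such that for all n > N and all natural numbers a, b ≥ 0, multiplication by 1 − tⁿ·(f₁·tᵃ + f₂·tᵇ) is universally injective as an A-linear map B → B. -/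
/-!
Grade the `A`-basis `Tᵏ • bas i` of `B` by `k`. Once `n` exceeds the most negative `T`-exponent
occurring in the coordinates of the `f_l * bas i`, multiplication by `u = 1 - Tⁿ (f₁ Tᵃ + f₂ Tᵇ)`
is unitriangular: on a basis vector of degree `m`, its coordinates in degrees `≤ m` are those of
the vector itself. This survives `- ⊗_A A'`, where the basis turns `B ⊗ A'` into
`ℤ × Fin d →₀ A'`, so `u ⊗ A'` never kills the lowest-degree coordinate of a nonzero element.
-/

open LaurentPolynomial Filter

theorem Finsupp.apply_eq_of_unitriangular {ι β M : Type*} [Preorder β] [AddCommMonoid M]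
    (deg : ι → β) (ψ : (ι →₀ M) →+ (ι →₀ M))
    (hψ : ∀ p q m, deg q ≤ deg p → ψ (single p m) q = single p m q)
    (y : ι →₀ M) (q : ι) (hq : ∀ p ∈ y.support, deg q ≤ deg p) : ψ y q = y q := by
  classical
  conv_lhs => rw [← y.sum_single]
  rw [map_finsuppSum, Finsupp.sum_apply]
  conv_rhs => rw [← y.sum_single, Finsupp.sum_apply]
  exact Finset.sum_congr rfl fun p hp => hψ p q _ (hq p hp)

theorem Finsupp.injective_of_unitriangular {ι β M : Type*} [LinearOrder β] [AddCommGroup M]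
    (deg : ι → β) (ψ : (ι →₀ M) →+ (ι →₀ M))
    (hψ : ∀ p q m, deg q ≤ deg p → ψ (single p m) q = single p m q) :
    Function.Injective ψ := by
  refine (injective_iff_map_eq_zero ψ).2 fun y hy => ?_
  by_contra hne
  obtain ⟨q, hq, hmin⟩ := y.support.exists_min_image deg (support_nonempty_iff.2 hne)
  have := apply_eq_of_unitriangular deg ψ hψ y q hmin
  rw [hy] at this
  exact mem_support_iff.1 hq this.symm

open TensorProduct in
theorem Module.Basis.rTensor_injective_of_unitriangular_s18 {R M ι β : Type*} [CommRing R]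
    [AddCommGroup M] [Module R M] [LinearOrder β] (b : Module.Basis ι R M) (deg : ι → β)
    (φ : M →ₗ[R] M) (hφ : ∀ p q, deg q ≤ deg p → b.repr (φ (b p)) q = Finsupp.single p 1 q)
    (N : Type*) [AddCommGroup N] [Module R N] : Function.Injective (φ.rTensor N) := by
  classical
  let e : M ⊗[R] N ≃ₗ[R] (ι →₀ N) :=
    (TensorProduct.congr b.repr (LinearEquiv.refl R N)).trans (finsuppScalarLeft R N ι)
  let ψ : (ι →₀ N) →+ (ι →₀ N) :=
    (e.toLinearMap ∘ₗ φ.rTensor N ∘ₗ e.symm.toLinearMap).toAddMonoidHom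
  have hψ : Function.Injective ψ := by
    refine Finsupp.injective_of_unitriangular deg ψ fun p q n hpq => ?_
    simp [ψ, e, hφ p q hpq, Finsupp.single_apply]
  intro x y hxy
  apply e.injective
  apply hψ
  simp [ψ, hxy]

theorem LaurentPolynomial.eventually_coeff_eq_zero_atBot {A : Type*} [Semiring A]
    (p : A[T;T⁻¹]) :
    ∀ᶠ k in atBot, p.coeff k = 0 :=
  atBot_le_cofinite (eventually_cofinite.2 p.coeff.hasFiniteSupport)

namespace Module.Basis

variable {A B ι : Type*} [CommRing A] [CommRing B] [Algebra A[T;T⁻¹] B]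
  (bas : Basis ι A[T;T⁻¹] B)

theorem exists_forall_lt_coeff_repr_mul_eq_zero [Finite ι] (f : B) :
    ∃ N : ℕ, ∀ i j (k : ℤ), k < -N → (bas.repr (f * bas i) j).coeff k = 0 := by
  obtain ⟨K, hK⟩ := eventually_atBot.1 <| eventually_all.2 fun i => eventually_all.2 fun j =>
    (bas.repr (f * bas i) j).eventually_coeff_eq_zero_atBot
  exact ⟨(-K).toNat, fun i j k hk => hK k (by omega) i j⟩

theorem coeff_repr_T_mul_mul_eq_zero {f : B} {N : ℕ}
    (hf : ∀ i j (k : ℤ), k < -N → (bas.repr (f * bas i) j).coeff k = 0) {s : ℤ} (hs : N < s)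
    (i j : ι) {m k : ℤ} (hkm : k ≤ m) :
    (bas.repr (algebraMap A[T;T⁻¹] B (T s) * f * ((T m : A[T;T⁻¹]) • bas i)) j).coeff k = 0 := by
  rw [mul_smul_comm, mul_assoc, ← Algebra.smul_def, smul_smul, ← T_add, map_smul,
    Finsupp.smul_apply, smul_eq_mul]
  change (AddMonoidAlgebra.single (m + s) 1 * _).coeff k = 0
  rw [AddMonoidAlgebra.coeff_single_mul_apply, one_mul]
  exact hf i j _ (by omega)

variable [Algebra A B] [IsScalarTower A A[T;T⁻¹] B]

theorem smulTower_laurent_apply (k : ℤ) (i : ι) :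
    (AddMonoidAlgebra.basis ℤ A).smulTower bas (k, i) = (T k : A[T;T⁻¹]) • bas i := by
  rw [smulTower_apply, AddMonoidAlgebra.basis_apply]; rfl

theorem smulTower_laurent_repr (x : B) (k : ℤ) (i : ι) :
    ((AddMonoidAlgebra.basis ℤ A).smulTower bas).repr x (k, i) = (bas.repr x i).coeff k := by
  rw [smulTower_repr]; rfl

theorem rTensor_mulLeft_one_sub_injective (g : B)
    (hg : ∀ i j (m k : ℤ), k ≤ m → (bas.repr (g * ((T m : A[T;T⁻¹]) • bas i)) j).coeff k = 0)
    (A' : Type*) [AddCommGroup A'] [Module A A'] :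
    Function.Injective ((LinearMap.mulLeft A (1 - g)).rTensor A') := by
  classical
  refine ((AddMonoidAlgebra.basis ℤ A).smulTower bas).rTensor_injective_of_unitriangular_s18 Prod.fst
    _ (fun ⟨m, i⟩ ⟨k, j⟩ hkm => ?_) A'
  rw [LinearMap.mulLeft_apply, smulTower_laurent_apply, smulTower_laurent_repr, sub_mul, one_mul,
    map_sub, map_smul, repr_self, Finsupp.sub_apply, AddMonoidAlgebra.coeff_sub, Finsupp.sub_apply,
    hg i j m k hkm, sub_zero, Finsupp.smul_apply, Finsupp.single_apply, Finsupp.single_apply]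
  by_cases hij : i = j
  · subst hij; simp [T_apply]
  · simp [hij]

end Module.Basis

/-- If `B` is finite free of rank `d` over `A[t,t⁻¹]` and `f₁, f₂ ∈ B`, then for `n` large
and all `a, b ≥ 0`, multiplication by `1 - tⁿ·(f₁·tᵃ + f₂·tᵇ)` is universally injective
as an `A`-linear map `B → B`. -/
theorem stmt_18 (A B : Type*) [CommRing A] [CommRing B]
    [Algebra A B] [Algebra (LaurentPolynomial A) B]
    [IsScalarTower A (LaurentPolynomial A) B]
    (d : ℕ) (bas : Module.Basis (Fin d) (LaurentPolynomial A) B)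
    (f₁ f₂ : B) :
    ∃ N : ℕ, ∀ n : ℕ, n > N → ∀ a b : ℕ,
      ∀ (A' : Type*) [AddCommGroup A'] [Module A A'],
        Function.Injective
          (LinearMap.rTensor A'
            (LinearMap.mulLeft A
              (1 - algebraMap (LaurentPolynomial A) B (T (n : ℤ)) *
                (f₁ * algebraMap (LaurentPolynomial A) B (T (a : ℤ)) +
                  f₂ * algebraMap (LaurentPolynomial A) B (T (b : ℤ)))))) := by
  obtain ⟨N₁, hN₁⟩ := bas.exists_forall_lt_coeff_repr_mul_eq_zero f₁
  obtain ⟨N₂, hN₂⟩ := bas.exists_forall_lt_coeff_repr_mul_eq_zero f₂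
  refine ⟨max N₁ N₂, fun n hn a b A' _ _ => ?_⟩
  have hg : algebraMap A[T;T⁻¹] B (T n) *
      (f₁ * algebraMap A[T;T⁻¹] B (T a) + f₂ * algebraMap A[T;T⁻¹] B (T b)) =
      algebraMap A[T;T⁻¹] B (T (n + a)) * f₁ + algebraMap A[T;T⁻¹] B (T (n + b)) * f₂ := by
    rw [T_add, T_add, map_mul, map_mul]; ring
  rw [hg]
  refine bas.rTensor_mulLeft_one_sub_injective _ (fun i j m k hkm => ?_) A'
  rw [add_mul, map_add, Finsupp.add_apply, AddMonoidAlgebra.coeff_add, Finsupp.add_apply,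
    bas.coeff_repr_T_mul_mul_eq_zero hN₁ (by omega) i j hkm,
    bas.coeff_repr_T_mul_mul_eq_zero hN₂ (by omega) i j hkm, add_zero]
end
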